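/- arXiv:1304.3710 — 3 statements merged into one kernel-verified Lean document; each statement's English description precedes it below -/
import Mathlib

section
/- For all ξ₁, η₁, ξ₂, η₂ ∈ C_c²((0,∞)), the following orthogonality relation holds: ∫₀^∞ ∫_ℝ (ξ₁ *₊ η₁)(b,a) · conj((ξ₂ *₊ η₂)(b,a)) db a⁻² da = (∫₀^∞ η₂(t) conj(η₁(t)) t⁻¹ dt) · (∫₀^∞ ξ₁(t) conj(ξ₂(t)) t⁻² dt). In particular both sides are well defined (the integrand on the left is integrable). -/
open MeasureTheory Set

/-- Coefficient function of the representation `π₊` of the real `ax+b` group: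
`(ξ *₊ η)(b,a) = ∫₀^∞ e^{-2πibt} ξ(at) conj(η(t)) t⁻¹ dt`. -/
noncomputable def coeffP (ξ η : ℝ → ℂ) (b a : ℝ) : ℂ :=
  ∫ t in Ioi (0 : ℝ),
    Complex.exp (-(2 * Real.pi * b * t : ℝ) * Complex.I) * ξ (a * t)
      * starRingEnd ℂ (η t) * (t : ℂ)⁻¹

/-- Coefficient function of the representation `π₋` of the real `ax+b` group:
`(ξ *₋ η)(b,a) = ∫₀^∞ e^{2πibt} ξ(at) conj(η(t)) t⁻¹ dt`. -/
noncomputable def coeffM (ξ η : ℝ → ℂ) (b a : ℝ) : ℂ :=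
  ∫ t in Ioi (0 : ℝ),
    Complex.exp ((2 * Real.pi * b * t : ℝ) * Complex.I) * ξ (a * t)
      * starRingEnd ℂ (η t) * (t : ℂ)⁻¹

/-- `C_c²((0,∞))`: twice continuously differentiable complex-valued functions on `ℝ`
with compact support contained in `(0,∞)`. -/
def CcTwo (f : ℝ → ℂ) : Prop :=
  ContDiff ℝ 2 f ∧ HasCompactSupport f ∧ tsupport f ⊆ Ioi (0 : ℝ)

/-- Left Haar measure `a⁻² db da` of the `ax+b` group, modelled on `ℝ × (0,∞)`
(first coordinate `b`, second coordinate `a`). -/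
noncomputable def muG : Measure (ℝ × ℝ) :=
  (((volume : Measure ℝ).prod ((volume : Measure ℝ).restrict (Ioi (0 : ℝ)))).withDensity
    fun p => ENNReal.ofReal ((p.2 ^ 2)⁻¹))

/-!
For fixed `a`, the function `b ↦ (ξ *₊ η)(b, a)` is the Fourier transform of
`t ↦ ξ(at) conj(η t) t⁻¹`, so by Plancherel the `db`-integral of `(ξ₁ *₊ η₁) conj(ξ₂ *₊ η₂)`
is `∫₀^∞ ξ₁(at) conj(ξ₂(at)) η₂(t) conj(η₁(t)) t⁻² dt`. Integrating against `a⁻² da` and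
substituting `s = at` separates the variables. For integrability, the same computation applied
to the diagonal terms `a⁻² |ξ *₊ η|²` shows that they are integrable on `G`, and by AM-GM they
dominate the cross term.
-/

open Complex FourierTransform Real
open scoped ComplexConjugate

theorem HasCompactSupport.iteratedDeriv {𝕜 F : Type*} [NontriviallyNormedField 𝕜]
    [NormedAddCommGroup F] [NormedSpace 𝕜 F] {f : 𝕜 → F} (hf : HasCompactSupport f) (n : ℕ) :
    HasCompactSupport (iteratedDeriv n f) := by
  rw [iteratedDeriv_eq_iterate]
  induction n with
  | zero => exact hf
  | succ n ih => rw [Function.iterate_succ_apply']; exact ih.deriv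

theorem ContDiff.mul_inv_ofReal_pow {f : ℝ → ℂ} {n : WithTop ℕ∞} (hf : ContDiff ℝ n f)
    (h0 : (0 : ℝ) ∉ tsupport f) (k : ℕ) : ContDiff ℝ n fun t => f t * ((t : ℂ) ^ k)⁻¹ := by
  refine contDiff_iff_contDiffAt.2 fun x => ?_
  by_cases hx : x ∈ tsupport f
  · have hx0 : (x : ℂ) ^ k ≠ 0 := pow_ne_zero _ (ofReal_ne_zero.2 (ne_of_mem_of_not_mem hx h0))
    exact hf.contDiffAt.mul ((ofRealCLM.contDiff.pow k).contDiffAt.inv hx0)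
  · refine (contDiffAt_const (c := (0 : ℂ))).congr_of_eventuallyEq ?_
    filter_upwards [(isClosed_tsupport f).isOpen_compl.mem_nhds hx] with y hy
    simp [image_eq_zero_of_notMem_tsupport hy]

theorem integrable_iteratedDeriv_of_contDiff {E : Type*} [NormedAddCommGroup E] [NormedSpace ℝ E]
    {f : ℝ → E} {n : ℕ} (hf : ContDiff ℝ n f) (hc : HasCompactSupport f) {m : ℕ} (hm : m ≤ n) :
    Integrable (iteratedDeriv m f) :=
  (hf.continuous_iteratedDeriv m (by exact_mod_cast hm)).integrable_of_hasCompactSupport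
    (hc.iteratedDeriv m)

section Fourier

variable {E : Type*} [NormedAddCommGroup E] [NormedSpace ℂ E] {f : ℝ → E}

theorem one_add_sq_mul_norm_fourier_le (hf : ContDiff ℝ 2 f) (hc : HasCompactSupport f) (x : ℝ) :
    (1 + x ^ 2) * ‖𝓕 f x‖ ≤ (∫ t, ‖f t‖) + ∫ t, ‖iteratedDeriv 2 f t‖ := by
  have hderiv := Real.fourier_iteratedDeriv (N := 2) (n := 2) hf
    (fun m hm => integrable_iteratedDeriv_of_contDiff hf hc (by exact_mod_cast hm)) le_rfl
  have h0 : ‖𝓕 f x‖ ≤ ∫ t, ‖f t‖ := VectorFourier.norm_fourierIntegral_le_integral_norm _ _ _ _ _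
  have h2 : x ^ 2 * ‖𝓕 f x‖ ≤ ∫ t, ‖iteratedDeriv 2 f t‖ := calc
    x ^ 2 * ‖𝓕 f x‖ ≤ (2 * π * |x|) ^ 2 * ‖𝓕 f x‖ := by
      gcongr ?_ * _
      have : 1 ≤ (2 * π) ^ 2 := by nlinarith [Real.pi_gt_three]
      rw [mul_pow, sq_abs]
      nlinarith [sq_nonneg x]
    _ = ‖𝓕 (iteratedDeriv 2 f) x‖ := by
      rw [hderiv, norm_smul, norm_pow]
      simp [abs_of_pos Real.pi_pos]
    _ ≤ _ := VectorFourier.norm_fourierIntegral_le_integral_norm _ _ _ _ _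
  linarith

theorem integrable_fourier_of_contDiff_two (hf : ContDiff ℝ 2 f) (hc : HasCompactSupport f) :
    Integrable (𝓕 f) := by
  refine (integrable_inv_one_add_sq.const_mul ((∫ t, ‖f t‖) + ∫ t, ‖iteratedDeriv 2 f t‖)).mono'
    (VectorFourier.fourierIntegral_continuous Real.continuous_fourierChar continuous_inner
      (hf.continuous.integrable_of_hasCompactSupport hc)).aestronglyMeasurable
    (.of_forall fun x => ?_)
  rw [← div_eq_mul_inv, le_div_iff₀' (by positivity)]
  exact one_add_sq_mul_norm_fourier_le hf hc x

theorem integral_fourier_mul_conj_fourier {f g : ℝ → ℂ} (hf : Integrable f)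
    (hf' : Integrable (𝓕 f)) (hfc : Continuous f) (hg : Integrable g) :
    ∫ x, 𝓕 f x * conj (𝓕 g x) = ∫ t, f t * conj (g t) := by
  have h := VectorFourier.integral_sesq_fourierIntegral_eq_neg_flip (innerSL ℂ)
    (L := innerₗ ℝ) Real.continuous_fourierChar continuous_inner hg hf'
  have hinv : VectorFourier.fourierIntegral 𝐞 volume (-(innerₗ ℝ).flip) (𝓕 f) = f := by
    convert hfc.fourierInv_fourier_eq hf hf' using 1
    ext x
    simp [Real.fourierInv_eq, VectorFourier.fourierIntegral]
  have hg' : VectorFourier.fourierIntegral 𝐞 volume (innerₗ ℝ) g = 𝓕 g := rfl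
  rw [hinv] at h
  simpa [hg', mul_comm] using h

end Fourier

section Dilation

variable {G u : ℝ → ℂ}

theorem integrable_comp_mul_mul_prod_Ioi (hGm : Measurable G) (hum : Measurable u)
    (hG : IntegrableOn G (Ioi 0)) (hu : IntegrableOn (fun t => u t * (t : ℂ)⁻¹) (Ioi 0)) :
    Integrable (fun p : ℝ × ℝ => G (p.1 * p.2) * u p.2)
      ((volume.restrict (Ioi 0)).prod (volume.restrict (Ioi 0))) := by
  have hmeas : Measurable fun p : ℝ × ℝ => G (p.1 * p.2) * u p.2 := by fun_prop
  refine (integrable_prod_iff' hmeas.aestronglyMeasurable).2 ⟨?_, ?_⟩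
  · filter_upwards [ae_restrict_mem measurableSet_Ioi] with t ht
    exact ((integrableOn_Ioi_comp_mul_right_iff G 0 ht).2 (by simpa using hG)).mul_const _
  · refine (hu.norm.mul_const (∫ s in Ioi 0, ‖G s‖)).congr ?_
    filter_upwards [ae_restrict_mem measurableSet_Ioi] with t (ht : 0 < t)
    simp only [norm_mul, integral_mul_const, integral_comp_mul_right_Ioi (‖G ·‖) 0 ht, zero_mul,
      norm_inv, norm_real, Real.norm_of_nonneg ht.le, smul_eq_mul]
    ring

theorem integral_comp_mul_mul_prod_Ioi (hGm : Measurable G) (hum : Measurable u)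
    (hG : IntegrableOn G (Ioi 0)) (hu : IntegrableOn (fun t => u t * (t : ℂ)⁻¹) (Ioi 0)) :
    ∫ p, G (p.1 * p.2) * u p.2 ∂((volume.restrict (Ioi 0)).prod (volume.restrict (Ioi 0)))
      = (∫ t in Ioi 0, u t * (t : ℂ)⁻¹) * ∫ s in Ioi 0, G s := by
  rw [integral_prod_symm _ (integrable_comp_mul_mul_prod_Ioi hGm hum hG hu),
    ← integral_mul_const]
  refine setIntegral_congr_fun measurableSet_Ioi fun t (ht : 0 < t) => ?_
  simp only [integral_mul_const, integral_comp_mul_right_Ioi G 0 ht, zero_mul, Complex.real_smul,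
    ofReal_inv]
  ring

end Dilation

section HaarMeasure

variable {E : Type*} [NormedAddCommGroup E] [NormedSpace ℝ E]

theorem measurable_muG_density : Measurable fun p : ℝ × ℝ => ENNReal.ofReal ((p.2 ^ 2)⁻¹) := by
  fun_prop

theorem integrable_muG_iff {f : ℝ × ℝ → E} :
    Integrable f muG ↔ Integrable (fun p => (p.2 ^ 2)⁻¹ • f p)
      ((volume : Measure ℝ).prod (volume.restrict (Ioi 0))) := by
  rw [muG, integrable_withDensity_iff_integrable_smul' measurable_muG_density
    (.of_forall fun _ => ENNReal.ofReal_lt_top)]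
  simp only [ENNReal.toReal_ofReal (inv_nonneg.2 (sq_nonneg _))]

theorem integral_muG (f : ℝ × ℝ → E) :
    ∫ p, f p ∂muG
      = ∫ p, (p.2 ^ 2)⁻¹ • f p ∂((volume : Measure ℝ).prod (volume.restrict (Ioi 0))) := by
  rw [muG, integral_withDensity_eq_integral_toReal_smul measurable_muG_density
    (.of_forall fun _ => ENNReal.ofReal_lt_top)]
  simp only [ENNReal.toReal_ofReal (inv_nonneg.2 (sq_nonneg _))]

end HaarMeasure

section Coefficients

noncomputable def coeffIntegrand (ξ η : ℝ → ℂ) (a t : ℝ) : ℂ := ξ (a * t) * conj (η t) * (t : ℂ)⁻¹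

variable {ξ η ξ₁ η₁ ξ₂ η₂ : ℝ → ℂ}

theorem CcTwo.support_subset (hη : CcTwo η) : Function.support η ⊆ Ioi 0 :=
  (subset_tsupport η).trans hη.2.2

theorem CcTwo.zero_notMem_tsupport (hη : CcTwo η) : (0 : ℝ) ∉ tsupport η :=
  fun h => lt_irrefl (0 : ℝ) (hη.2.2 h)

theorem CcTwo.integrable_mul_conj_mul_inv_pow (hξ : CcTwo ξ) (hη : Continuous η) (k : ℕ) :
    Integrable fun t => ξ t * conj (η t) * ((t : ℂ) ^ k)⁻¹ := by
  have hc : ContDiff ℝ 0 fun t => ξ t * conj (η t) :=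
    contDiff_zero.2 (hξ.1.continuous.mul (continuous_conj.comp hη))
  exact (hc.mul_inv_ofReal_pow (fun h => hξ.zero_notMem_tsupport (tsupport_mul_subset_left h)) k
    ).continuous.integrable_of_hasCompactSupport hξ.2.1.mul_right.mul_right

theorem coeffP_eq_fourier (hη : Function.support η ⊆ Ioi 0) (b a : ℝ) :
    coeffP ξ η b a = 𝓕 (coeffIntegrand ξ η a) b := by
  rw [Real.fourier_real_eq_integral_exp_smul, coeffP,
    ← setIntegral_eq_integral_of_forall_compl_eq_zero (s := Ioi 0) (μ := volume) fun t ht => ?_]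
  · refine setIntegral_congr_fun measurableSet_Ioi fun t _ => ?_
    simp only [coeffIntegrand, smul_eq_mul]
    push_cast
    ring_nf
  · simp [coeffIntegrand, Function.notMem_support.1 fun h => ht (hη h)]

theorem contDiff_coeffIntegrand {n : WithTop ℕ∞} (hξ : ContDiff ℝ n ξ) (hη : ContDiff ℝ n η)
    (h0 : (0 : ℝ) ∉ tsupport η) (a : ℝ) : ContDiff ℝ n (coeffIntegrand ξ η a) := by
  have h0' : (0 : ℝ) ∉ tsupport fun t => conj (η t) :=
    fun h => h0 (tsupport_comp_subset (map_zero (starRingEnd ℂ)) η h)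
  have h : coeffIntegrand ξ η a = fun t => ξ (a * t) * (conj (η t) * ((t : ℂ) ^ 1)⁻¹) := by
    funext t
    simp [coeffIntegrand, mul_assoc]
  rw [h]
  exact (hξ.comp (contDiff_const.mul contDiff_id)).mul
    ((conjCLE.contDiff.comp hη).mul_inv_ofReal_pow h0' 1)

theorem hasCompactSupport_coeffIntegrand (hη : HasCompactSupport η) (ξ : ℝ → ℂ) (a : ℝ) :
    HasCompactSupport (coeffIntegrand ξ η a) :=
  hη.mono fun t ht h => ht (by simp [coeffIntegrand, h])

theorem measurable_coeffP (hξ : Measurable ξ) (hη : Measurable η) :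
    Measurable fun p : ℝ × ℝ => coeffP ξ η p.1 p.2 :=
  (StronglyMeasurable.integral_prod_right' (ν := volume.restrict (Ioi 0))
    (f := fun q : (ℝ × ℝ) × ℝ => Complex.exp (-(2 * π * q.1.1 * q.2 : ℝ) * I) * ξ (q.1.2 * q.2)
      * conj (η q.2) * (q.2 : ℂ)⁻¹) (by fun_prop : Measurable _).stronglyMeasurable).measurable

/-- This holds for all `a` and `t`, including `0`, because both sides then vanish
(`(0 : ℂ)⁻¹ = 0`). -/
theorem inv_sq_smul_coeffIntegrand_mul_conj (a t : ℝ) :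
    (a ^ 2)⁻¹ • (coeffIntegrand ξ₁ η₁ a t * conj (coeffIntegrand ξ₂ η₂ a t))
      = ξ₁ (a * t) * conj (ξ₂ (a * t)) * (((a * t : ℝ) : ℂ) ^ 2)⁻¹ * (η₂ t * conj (η₁ t)) := by
  rcases eq_or_ne a 0 with rfl | ha
  · simp
  rcases eq_or_ne t 0 with rfl | ht
  · simp [coeffIntegrand]
  simp only [coeffIntegrand, Complex.real_smul, map_mul, map_inv₀, conj_conj, conj_ofReal]
  push_cast
  field_simp

theorem integral_inv_sq_smul_coeffP_mul_conj (hξ₁ : ContDiff ℝ 2 ξ₁) (hη₁ : CcTwo η₁)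
    (hξ₂ : ContDiff ℝ 2 ξ₂) (hη₂ : CcTwo η₂) (a : ℝ) :
    ∫ b, (a ^ 2)⁻¹ • (coeffP ξ₁ η₁ b a * conj (coeffP ξ₂ η₂ b a))
      = ∫ t in Ioi 0,
          ξ₁ (a * t) * conj (ξ₂ (a * t)) * (((a * t : ℝ) : ℂ) ^ 2)⁻¹ * (η₂ t * conj (η₁ t)) := by
  have hg₁ := contDiff_coeffIntegrand hξ₁ hη₁.1 hη₁.zero_notMem_tsupport a
  have hg₂ := contDiff_coeffIntegrand hξ₂ hη₂.1 hη₂.zero_notMem_tsupport a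
  have hc₁ := hasCompactSupport_coeffIntegrand hη₁.2.1 ξ₁ a
  have hc₂ := hasCompactSupport_coeffIntegrand hη₂.2.1 ξ₂ a
  simp_rw [coeffP_eq_fourier hη₁.support_subset, coeffP_eq_fourier hη₂.support_subset]
  rw [integral_smul, integral_fourier_mul_conj_fourier
    (hg₁.continuous.integrable_of_hasCompactSupport hc₁)
    (integrable_fourier_of_contDiff_two hg₁ hc₁) hg₁.continuous
    (hg₂.continuous.integrable_of_hasCompactSupport hc₂), ← integral_smul]
  simp_rw [inv_sq_smul_coeffIntegrand_mul_conj]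
  refine (setIntegral_eq_integral_of_forall_compl_eq_zero fun t ht => ?_).symm
  simp [Function.notMem_support.1 fun h => ht (hη₂.support_subset h)]

theorem integrable_inv_sq_mul_norm_coeffP_sq (hξ : CcTwo ξ) (hη : CcTwo η) :
    Integrable (fun p : ℝ × ℝ => (p.2 ^ 2)⁻¹ * ‖coeffP ξ η p.1 p.2‖ ^ 2)
      ((volume : Measure ℝ).prod (volume.restrict (Ioi 0))) := by
  have hξm := hξ.1.continuous.measurable
  have hηm := hη.1.continuous.measurable
  have hK := integrable_comp_mul_mul_prod_Ioi (G := fun s => ξ s * conj (ξ s) * ((s : ℂ) ^ 2)⁻¹)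
    (u := fun t => η t * conj (η t)) (by fun_prop) (by fun_prop)
    (hξ.integrable_mul_conj_mul_inv_pow hξ.1.continuous 2).integrableOn
    (by simpa using (hη.integrable_mul_conj_mul_inv_pow hη.1.continuous 1).integrableOn)
  have hm := measurable_coeffP hξm hηm
  refine (integrable_prod_iff' (by fun_prop : Measurable _).aestronglyMeasurable).2
    ⟨.of_forall fun a => ?_, hK.integral_prod_left.norm.congr (.of_forall fun a => ?_)⟩
  · have hg := contDiff_coeffIntegrand hξ.1 hη.1 hη.zero_notMem_tsupport a
    have hF := integrable_fourier_of_contDiff_two hg (hasCompactSupport_coeffIntegrand hη.2.1 ξ a)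
    simp_rw [coeffP_eq_fourier hη.support_subset, sq]
    refine (hF.norm.bdd_mul (c := ∫ t, ‖coeffIntegrand ξ η a t‖) hF.norm.aestronglyMeasurable
      (.of_forall fun b => ?_)).const_mul _
    rw [norm_norm]
    exact VectorFourier.norm_fourierIntegral_le_integral_norm _ _ _ _ _
  · have hreal : ∀ b, (a ^ 2)⁻¹ • (coeffP ξ η b a * conj (coeffP ξ η b a))
        = (((a ^ 2)⁻¹ * ‖coeffP ξ η b a‖ ^ 2 : ℝ) : ℂ) := fun b => by
      rw [mul_conj', Complex.real_smul]
      push_cast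
      ring
    dsimp only
    rw [← integral_inv_sq_smul_coeffP_mul_conj hξ.1 hη hξ.1 hη a,
      integral_congr_ae (.of_forall hreal), integral_complex_ofReal, norm_real, Real.norm_eq_abs]
    exact (abs_of_nonneg (integral_nonneg fun b => by positivity)).trans
      (integral_congr_ae (.of_forall fun b => (Real.norm_of_nonneg (by positivity)).symm))

theorem integrable_inv_sq_smul_coeffP_mul_conj (hξ₁ : CcTwo ξ₁) (hη₁ : CcTwo η₁)
    (hξ₂ : CcTwo ξ₂) (hη₂ : CcTwo η₂) :
    Integrable (fun p : ℝ × ℝ => (p.2 ^ 2)⁻¹ • (coeffP ξ₁ η₁ p.1 p.2 * conj (coeffP ξ₂ η₂ p.1 p.2)))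
      ((volume : Measure ℝ).prod (volume.restrict (Ioi 0))) := by
  have hm₁ := measurable_coeffP hξ₁.1.continuous.measurable hη₁.1.continuous.measurable
  have hm₂ := measurable_coeffP hξ₂.1.continuous.measurable hη₂.1.continuous.measurable
  refine ((integrable_inv_sq_mul_norm_coeffP_sq hξ₁ hη₁).add
    (integrable_inv_sq_mul_norm_coeffP_sq hξ₂ hη₂)).mono'
    (by fun_prop : Measurable _).aestronglyMeasurable (.of_forall fun p => ?_)
  have hw : 0 ≤ (p.2 ^ 2)⁻¹ := by positivity
  rw [norm_smul, norm_mul, RCLike.norm_conj, Real.norm_of_nonneg hw, Pi.add_apply, ← mul_add]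
  gcongr
  nlinarith [sq_nonneg (‖coeffP ξ₁ η₁ p.1 p.2‖ - ‖coeffP ξ₂ η₂ p.1 p.2‖)]

end Coefficients

/-- **Orthogonality relations for `π₊`** (Proposition 4.5(a) of Choi–Ghandehari):
for `ξᵢ, ηᵢ ∈ C_c²((0,∞))`,
`⟨ξ₁ *₊ η₁, ξ₂ *₊ η₂⟩_{L²(G)} = ⟨η₂, η₁⟩_ℋ ⟨K^{-1/2}ξ₁, K^{-1/2}ξ₂⟩_ℋ`. -/
theorem orthogonality_plus_plus (ξ₁ η₁ ξ₂ η₂ : ℝ → ℂ)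
    (hξ₁ : CcTwo ξ₁) (hη₁ : CcTwo η₁) (hξ₂ : CcTwo ξ₂) (hη₂ : CcTwo η₂) :
    Integrable (fun p : ℝ × ℝ =>
      coeffP ξ₁ η₁ p.1 p.2 * starRingEnd ℂ (coeffP ξ₂ η₂ p.1 p.2)) muG ∧
    ∫ p, coeffP ξ₁ η₁ p.1 p.2 * starRingEnd ℂ (coeffP ξ₂ η₂ p.1 p.2) ∂muG
      = (∫ t in Ioi (0 : ℝ), η₂ t * starRingEnd ℂ (η₁ t) * (t : ℂ)⁻¹) *
        (∫ t in Ioi (0 : ℝ), ξ₁ t * starRingEnd ℂ (ξ₂ t) * ((t : ℂ) ^ 2)⁻¹) := by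
  have hint := integrable_inv_sq_smul_coeffP_mul_conj hξ₁ hη₁ hξ₂ hη₂
  refine ⟨integrable_muG_iff.2 hint, ?_⟩
  have hξ₁m := hξ₁.1.continuous.measurable
  have hξ₂m := hξ₂.1.continuous.measurable
  have hη₁m := hη₁.1.continuous.measurable
  have hη₂m := hη₂.1.continuous.measurable
  have hGm : Measurable fun s => ξ₁ s * conj (ξ₂ s) * ((s : ℂ) ^ 2)⁻¹ := by fun_prop
  have hum : Measurable fun t => η₂ t * conj (η₁ t) := by fun_prop
  have hG := (hξ₁.integrable_mul_conj_mul_inv_pow hξ₂.1.continuous 2).integrableOn (s := Ioi 0)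
  have hu : IntegrableOn (fun t => η₂ t * conj (η₁ t) * (t : ℂ)⁻¹) (Ioi 0) := by
    simpa using (hη₂.integrable_mul_conj_mul_inv_pow hη₁.1.continuous 1).integrableOn
  rw [integral_muG, integral_prod_symm _ hint, ← integral_comp_mul_mul_prod_Ioi hGm hum hG hu,
    integral_prod _ (integrable_comp_mul_mul_prod_Ioi hGm hum hG hu)]
  exact setIntegral_congr_fun measurableSet_Ioi fun a _ =>
    integral_inv_sq_smul_coeffP_mul_conj hξ₁.1 hη₁ hξ₂.1 hη₂ a
end

section
/- Let A be a Banach algebra over ℂ and x ∈ A an element such that the smallest closed subalgebra of A containing x is all of A. Let D : A × A → ℂ be a continuous bilinear form satisfying the Leibniz identity D(a*b, c) = D(a, b*c) + D(b, c*a) for all a, b, c ∈ A and the antisymmetry D(a, b) = −D(b, a) for all a, b ∈ A. Then D = 0. (In other words, every singly generated Banach algebra is cyclically amenable.) -/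
/-!
Write `x^k` for `k ≥ 1`. Taking `a = x`, `b = x^m`, `c = x^n` in the Leibniz identity gives
`D(x^(m+1), x^n) = D(x, x^(m+n)) + D(x^m, x^(n+1))`, so by induction
`D(x^m, x^n) = m • D(x, x^(m+n-1))`. Antisymmetry then yields `(m + n) • D(x, x^(m+n-1)) = 0`,
hence `D` vanishes on all pairs of powers of `x`. These span a dense subspace of `A`, and `D` is
continuous in each variable, so `D = 0`.
-/

section Semigroup

variable {S : Type*} [Semigroup S]

/-- `succPow x n = x ^ (n + 1)`: a semigroup only has positive powers. -/
def succPow (x : S) : ℕ → S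
  | 0 => x
  | n + 1 => x * succPow x n

@[simp]
lemma succPow_zero (x : S) : succPow x 0 = x := rfl

lemma succPow_succ (x : S) (n : ℕ) : succPow x (n + 1) = x * succPow x n := rfl

lemma succPow_add (x : S) (m n : ℕ) : succPow x (m + n + 1) = succPow x m * succPow x n := by
  induction m with
  | zero => rw [zero_add, succPow_succ, succPow_zero]
  | succ m ih => rw [add_right_comm m, succPow_succ, ih, succPow_succ, mul_assoc]

lemma succPow_succ' (x : S) (n : ℕ) : succPow x (n + 1) = succPow x n * x :=
  succPow_add x n 0

lemma Subsemigroup.mem_closure_singleton_iff_exists_succPow {x a : S} :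
    a ∈ closure {x} ↔ ∃ n, succPow x n = a := by
  constructor
  · intro ha
    induction ha using closure_induction with
    | mem y hy => exact ⟨0, (Set.mem_singleton_iff.mp hy).symm⟩
    | mul y z _ _ hy hz =>
      obtain ⟨i, rfl⟩ := hy
      obtain ⟨j, rfl⟩ := hz
      exact ⟨i + j + 1, succPow_add x i j⟩
  · rintro ⟨n, rfl⟩
    induction n with
    | zero => exact subset_closure rfl
    | succ n ih => exact mul_mem (subset_closure rfl) ih

variable {M : Type*} [AddCommGroup M] {D : S → S → M}

lemma apply_succPow_succPow_of_leibniz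
    (hleib : ∀ a b c, D (a * b) c = D a (b * c) + D b (c * a)) (x : S) (m n : ℕ) :
    D (succPow x m) (succPow x n) = (m + 1) • D x (succPow x (m + n)) := by
  induction m generalizing n with
  | zero => simp
  | succ m ih =>
    rw [succPow_succ, hleib, ← succPow_add, ← succPow_succ', ih, ← add_assoc,
      add_right_comm m, succ_nsmul' _ (m + 1)]

lemma apply_succPow_succPow_eq_zero [IsAddTorsionFree M]
    (hleib : ∀ a b c, D (a * b) c = D a (b * c) + D b (c * a)) (hanti : ∀ a b, D a b = -D b a)
    (x : S) (m n : ℕ) : D (succPow x m) (succPow x n) = 0 := by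
  have hsum : (m + n + 2) • D x (succPow x (m + n)) = 0 := by
    have h := hanti (succPow x m) (succPow x n)
    rw [apply_succPow_succPow_of_leibniz hleib, apply_succPow_succPow_of_leibniz hleib,
      add_comm n m, eq_neg_iff_add_eq_zero, ← add_nsmul] at h
    rwa [add_add_add_comm] at h
  rw [apply_succPow_succPow_of_leibniz hleib, nsmul_eq_zero_iff_right (by omega) |>.mp hsum,
    smul_zero]

lemma apply_eq_zero_of_mem_closure_singleton [IsAddTorsionFree M]
    (hleib : ∀ a b c, D (a * b) c = D a (b * c) + D b (c * a)) (hanti : ∀ a b, D a b = -D b a)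
    {x a b : S} (ha : a ∈ Subsemigroup.closure {x}) (hb : b ∈ Subsemigroup.closure {x}) :
    D a b = 0 := by
  obtain ⟨m, rfl⟩ := Subsemigroup.mem_closure_singleton_iff_exists_succPow.mp ha
  obtain ⟨n, rfl⟩ := Subsemigroup.mem_closure_singleton_iff_exists_succPow.mp hb
  exact apply_succPow_succPow_eq_zero hleib hanti x m n

end Semigroup

theorem singly_generated_cyclically_amenable_general
    {A : Type*} [NonUnitalNormedRing A] [NormedSpace ℂ A]
    [IsScalarTower ℂ A A] [SMulCommClass ℂ A A]
    (x : A)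
    (hx : Dense ((NonUnitalAlgebra.adjoin ℂ {x} : NonUnitalSubalgebra ℂ A) : Set A))
    (D : A →L[ℂ] A →L[ℂ] ℂ)
    (hleib : ∀ a b c : A, D (a * b) c = D a (b * c) + D b (c * a))
    (hanti : ∀ a b : A, D a b = -D b a) :
    D = 0 := by
  have hspan : Dense (Submodule.span ℂ (Subsemigroup.closure {x} : Set A) : Set A) := by
    rwa [← NonUnitalAlgebra.adjoin_eq_span]
  refine ContinuousLinearMap.ext_on hspan fun a ha =>
    ContinuousLinearMap.ext_on hspan fun b hb => ?_
  exact apply_eq_zero_of_mem_closure_singleton (D := fun a b => D a b) hleib hanti ha hb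

/-- **Singly generated Banach algebras are cyclically amenable** (Remark 2.2 of
Choi–Ghandehari): if `A` is a Banach algebra over `ℂ` topologically generated by a
single element `x` (i.e. the smallest closed subalgebra containing `x`, namely the
closure of the non-unital subalgebra generated by `x`, is all of `A`), then every
continuous cyclic derivation on `A` — i.e. every continuous bilinear form
`D : A × A → ℂ` satisfying the Leibniz identity `D(ab, c) = D(a, bc) + D(b, ca)`
and the antisymmetry `D(a,b) = -D(b,a)` — is zero. -/
theorem singly_generated_cyclically_amenable
    {A : Type*} [NonUnitalNormedRing A] [NormedSpace ℂ A]
    [IsScalarTower ℂ A A] [SMulCommClass ℂ A A] [CompleteSpace A]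
    (x : A)
    (hx : Dense ((NonUnitalAlgebra.adjoin ℂ {x} : NonUnitalSubalgebra ℂ A) : Set A))
    (D : A →L[ℂ] A →L[ℂ] ℂ)
    (hleib : ∀ a b c : A, D (a * b) c = D a (b * c) + D b (c * a))
    (hanti : ∀ a b : A, D a b = -D b a) :
    D = 0 :=
  singly_generated_cyclically_amenable_general x hx D hleib hanti
end

section
/- Let A and B be Banach algebras over ℂ and let θ : A → B be a continuous algebra homomorphism whose range is dense in B. Let D : B × B → ℂ be a continuous bilinear form satisfying D(b*b', c) = D(b, b'*c) + D(b', c*b) for all b, b', c ∈ B and D(b, b') = −D(b', b) for all b, b' ∈ B. Then the bilinear form D' : A × A → ℂ defined by D'(a, a') = D(θ(a), θ(a')) is continuous, satisfies D'(a*a', c) = D'(a, a'*c) + D'(a', c*a) for all a, a', c ∈ A, and satisfies D'(a, a') = −D'(a', a); moreover, if D ≠ 0 then D' ≠ 0. (Hence if A is cyclically amenable, so is B.) -/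
/-- **Pulling back cyclic derivations along dense-range homomorphisms**
(Section 2.1 of Choi–Ghandehari): if `θ : A → B` is a continuous algebra
homomorphism between Banach algebras over `ℂ` with dense range, and `D` is a
continuous cyclic derivation on `B` — i.e. a continuous bilinear form satisfying
`D(bb', c) = D(b, b'c) + D(b', cb)` and `D(b, b') = -D(b', b)` — then
`D'(a, a') := D(θ a, θ a')` is a continuous bilinear form on `A` satisfying the same
two identities, and `D' ≠ 0` whenever `D ≠ 0`.  (Hence if `A` is cyclically amenable,
so is `B`.) -/
theorem pullback_cyclic_derivation
    {A B : Type*}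
    [NonUnitalNormedRing A] [NormedSpace ℂ A]
    [IsScalarTower ℂ A A] [SMulCommClass ℂ A A] [CompleteSpace A]
    [NonUnitalNormedRing B] [NormedSpace ℂ B]
    [IsScalarTower ℂ B B] [SMulCommClass ℂ B B] [CompleteSpace B]
    (θ : A →ₙₐ[ℂ] B) (hθcont : Continuous θ) (hθdense : DenseRange θ)
    (D : B →L[ℂ] B →L[ℂ] ℂ)
    (hleib : ∀ b b' c : B, D (b * b') c = D b (b' * c) + D b' (c * b))
    (hanti : ∀ b b' : B, D b b' = -D b' b) :
    Continuous (fun p : A × A => D (θ p.1) (θ p.2)) ∧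
    (∀ a a' c : A, D (θ (a * a')) (θ c) = D (θ a) (θ (a' * c)) + D (θ a') (θ (c * a))) ∧
    (∀ a a' : A, D (θ a) (θ a') = -D (θ a') (θ a)) ∧
    (D ≠ 0 → ∃ a a' : A, D (θ a) (θ a') ≠ 0) := by
  refine ⟨?_, ?_, ?_, ?_⟩
  · exact (D.continuous₂.comp ((hθcont.comp continuous_fst).prodMk
      (hθcont.comp continuous_snd)) : _)
  · intro a a' c
    simp only [map_mul]
    exact hleib _ _ _
  · intro a a'
    exact hanti _ _
  · intro hD
    by_contra h
    push_neg at h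
    apply hD
    have key : ∀ b b' : B, D b b' = 0 := by
      have h1 : ∀ a : A, ∀ b : B, D (θ a) b = 0 := by
        intro a
        have : Continuous fun b : B => D (θ a) b := (D (θ a)).continuous
        refine fun b => hθdense.induction_on b
          (isClosed_eq this continuous_const) ?_
        intro a'; exact h a a'
      intro b b'
      refine hθdense.induction_on b (isClosed_eq ?_ continuous_const) ?_
      · exact D.continuous₂.comp (continuous_id.prodMk continuous_const)
      · intro a; exact h1 a b'
    ext b b'
    simp [key]
end
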